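/- Suppose f : ℝ^d → ℝ is differentiable, bounded below by f*, with L-Lipschitz gradient. Consider SGD iterates x_{t+1} = x_t − η(∇f(x_t) + δ_t), where the noise δ_t is a martingale difference with E[δ_t | F_{t-1}] = 0 and E[‖δ_t‖² | F_{t-1}] ≤ σ². Let m ≥ 1, ε > 0, and τ(ε) = inf{ n ≥ 1 : n ≡ 1 (mod m) and ‖∇f(x_n)‖² ≤ ε }. If L = 2 and η < ε/(mσ² + ε), setting η = c·ε/(mσ² + ε) for c ∈ (0,1), then E[τ(ε)] ≤ (f(x_1) − f*)m²σ²/(ε²c(1−c)) + O(m/ε). -/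

import Mathlib

/-!
Write `F t = f(x_t) - f*` and `G t = ‖∇f(x_t)‖²`. The descent lemma for an `L`-smooth `f`, the
martingale-difference property of the noise and its conditional variance bound give, for every
event `s ∈ ℱ_{t-1}`,
  `∫_s F (t+1) ≤ ∫_s F t - η (1 - L η / 2) ∫_s G t + (L η² / 2) σ² μ(s)`.
Run this along the `k`-th block of `m` steps on `A_k = {τ > k m + 1} ∈ ℱ_{k m}`: at the first
step of the block `G > ε` on `A_k`, so the block lowers `∫_{A_k} F` by at least `e μ(A_k)` with
`e = η (1 - L η / 2) ε - m L η² σ² / 2`, which is `η ε (1 - c)` for `L = 2` and the chosen `η`.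
As the `A_k` decrease and `F ≥ 0`, telescoping gives `e ∑ μ(A_k) ≤ f(x₁) - f*`, while
`τ ≤ 1 + m ∑ 1_{A_k}` pointwise.
-/

open MeasureTheory Finset ENNReal

open scoped NNReal RealInnerProductSpace

section Smooth

variable {E : Type*} [NormedAddCommGroup E] [InnerProductSpace ℝ E] [CompleteSpace E]
  {f : E → ℝ} {f' : E → E} {K : ℝ≥0}

theorem image_le_add_inner_add_of_lipschitzWith_gradient (hgrad : ∀ x, HasGradientAt f (f' x) x)
    (hLip : LipschitzWith K f') (a b : E) :
    f b ≤ f a + ⟪f' a, b - a⟫ + K / 2 * ‖b - a‖ ^ 2 := by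
  set v := b - a
  let φ : ℝ → ℝ := fun s => f (a + s • v) - s * ⟪f' a, v⟫ - K / 2 * s ^ 2 * ‖v‖ ^ 2
  have hφ : ∀ s, HasDerivAt φ (⟪f' (a + s • v), v⟫ - ⟪f' a, v⟫ - K * s * ‖v‖ ^ 2) s := by
    intro s
    have hline : HasDerivAt (fun s : ℝ => a + s • v) v s := by
      simpa using ((hasDerivAt_id s).smul_const v).const_add a
    have hf := (hgrad (a + s • v)).hasFDerivAt.comp_hasDerivAt s hline
    simp only [InnerProductSpace.toDual_apply_apply] at hf
    refine ((hf.sub ((hasDerivAt_id s).mul_const ⟪f' a, v⟫)).sub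
      (((hasDerivAt_pow 2 s).const_mul (K / 2 : ℝ)).mul_const (‖v‖ ^ 2))).congr_deriv ?_
    simp only [Nat.cast_ofNat]
    ring
  have hφ_anti : AntitoneOn φ (Set.Icc 0 1) := by
    refine antitoneOn_of_hasDerivWithinAt_nonpos (convex_Icc 0 1)
      (fun s _ => (hφ s).continuousAt.continuousWithinAt)
      (fun s _ => (hφ s).hasDerivWithinAt) fun s hs => ?_
    rw [interior_Icc] at hs
    have : ⟪f' (a + s • v) - f' a, v⟫ ≤ K * s * ‖v‖ ^ 2 :=
      calc ⟪f' (a + s • v) - f' a, v⟫ ≤ ‖f' (a + s • v) - f' a‖ * ‖v‖ := real_inner_le_norm _ _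
        _ ≤ K * ‖s • v‖ * ‖v‖ := by gcongr; simpa using hLip.norm_sub_le (a + s • v) a
        _ = K * s * ‖v‖ ^ 2 := by rw [norm_smul, Real.norm_of_nonneg hs.1.le]; ring
    rw [inner_sub_left] at this
    linarith
  have := hφ_anti (Set.left_mem_Icc.2 zero_le_one) (Set.right_mem_Icc.2 zero_le_one) zero_le_one
  simp only [φ, one_smul, zero_smul, add_zero, add_sub_cancel, v] at this
  linarith

theorem image_sgd_step_le (hgrad : ∀ x, HasGradientAt f (f' x) x) (hLip : LipschitzWith K f')
    (η : ℝ) (x ξ : E) :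
    f (x - η • (f' x + ξ)) ≤ f x - η * (1 - K * η / 2) * ‖f' x‖ ^ 2
      + (K * η ^ 2 - η) * ⟪f' x, ξ⟫ + K * η ^ 2 / 2 * ‖ξ‖ ^ 2 := by
  have h := image_le_add_inner_add_of_lipschitzWith_gradient hgrad hLip x (x - η • (f' x + ξ))
  rw [sub_sub_cancel_left, inner_neg_right, norm_neg, real_inner_smul_right, inner_add_right,
    real_inner_self_eq_norm_sq, norm_smul, mul_pow, norm_add_sq_real, Real.norm_eq_abs,
    sq_abs] at h
  linarith

end Smooth

section Expectation

variable {Ω E : Type*} {m m0 : MeasurableSpace Ω} {μ : Measure Ω}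

theorem LipschitzWith.comp_memLp_of_isFiniteMeasure {F : Type*} [NormedAddCommGroup E]
    [NormedAddCommGroup F] [IsFiniteMeasure μ] {g : E → F} {K : ℝ≥0}
    (hg : LipschitzWith K g) {X : Ω → E} {p : ℝ≥0∞} (hX : MemLp X p μ) :
    MemLp (fun ω => g (X ω)) p μ := by
  refine ((memLp_const ‖g 0‖).add (hX.norm.const_mul K)).of_le
    (hg.continuous.comp_aestronglyMeasurable hX.1) (ae_of_all _ fun ω => ?_)
  have := hg.norm_sub_le (X ω) 0
  rw [sub_zero] at this
  calc ‖g (X ω)‖ ≤ ‖g 0‖ + K * ‖X ω‖ := by linarith [norm_le_insert' (g (X ω)) (g 0)]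
    _ ≤ _ := le_abs_self _

theorem MeasureTheory.MemLp.integrable_sq_norm [NormedAddCommGroup E] {X : Ω → E}
    (hX : MemLp X 2 μ) : Integrable (fun ω => ‖X ω‖ ^ 2) μ :=
  (memLp_two_iff_integrable_sq_norm hX.1).1 hX

theorem memLp_sgd_step [NormedAddCommGroup E] [NormedSpace ℝ E] [IsFiniteMeasure μ] {f' : E → E}
    {K : ℝ≥0} (hLip : LipschitzWith K f') {X ξ : Ω → E} (hX : MemLp X 2 μ) (hξ : MemLp ξ 2 μ)
    (η : ℝ) : MemLp (fun ω => X ω - η • (f' (X ω) + ξ ω)) 2 μ :=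
  hX.sub (((hLip.comp_memLp_of_isFiniteMeasure hX).add hξ).const_smul η)

variable [NormedAddCommGroup E] [InnerProductSpace ℝ E] [CompleteSpace E]
  {f : E → ℝ} {f' : E → E} {K : ℝ≥0}

theorem integrable_comp_of_lipschitzWith_gradient [IsFiniteMeasure μ] {fstar : ℝ}
    (hgrad : ∀ x, HasGradientAt f (f' x) x) (hLip : LipschitzWith K f') (hlb : ∀ x, fstar ≤ f x)
    {X : Ω → E} (hX : MemLp X 2 μ) : Integrable (fun ω => f (X ω)) μ := by
  have hf : Continuous f := continuous_iff_continuousAt.2 fun x => (hgrad x).continuousAt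
  refine integrable_of_le_of_le (hf.comp_aestronglyMeasurable hX.1) (ae_of_all _ fun ω => hlb _)
    (ae_of_all _ fun ω => by
      simpa using image_le_add_inner_add_of_lipschitzWith_gradient hgrad hLip 0 (X ω))
    (integrable_const fstar) ?_
  exact ((integrable_const _).add ((hX.integrable one_le_two).const_inner _)).add
    (hX.integrable_sq_norm.const_mul _)

theorem setIntegral_inner_eq_zero_of_condExp_eq_zero (hm : m ≤ m0) [SigmaFinite (μ.trim hm)]
    {g ξ : Ω → E} (hg : StronglyMeasurable[m] g) (hgξ : Integrable (fun ω => ⟪g ω, ξ ω⟫) μ)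
    (hξ : Integrable ξ μ) (hce : μ[ξ|m] =ᵐ[μ] 0) {s : Set Ω} (hs : MeasurableSet[m] s) :
    ∫ ω in s, ⟪g ω, ξ ω⟫ ∂μ = 0 := by
  have hpull : μ[fun ω => ⟪g ω, ξ ω⟫|m] =ᵐ[μ] fun ω => ⟪g ω, (μ[ξ|m]) ω⟫ :=
    condExp_bilin_of_stronglyMeasurable_left (innerSL ℝ) hg hgξ hξ
  have hzero : (fun ω => ⟪g ω, (μ[ξ|m]) ω⟫) =ᵐ[μ] 0 :=
    hce.mono fun ω hω => by simp [hω]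
  rw [← setIntegral_condExp hm hgξ hs, integral_congr_ae (ae_restrict_of_ae (hpull.trans hzero))]
  simp

theorem setIntegral_le_of_condExp_le [IsFiniteMeasure μ] (hm : m ≤ m0) {h : Ω → ℝ}
    (hh : Integrable h μ) {c : ℝ} (hc : ∀ᵐ ω ∂μ, μ[h|m] ω ≤ c) {s : Set Ω}
    (hs : MeasurableSet[m] s) : ∫ ω in s, h ω ∂μ ≤ c * μ.real s := by
  rw [← setIntegral_condExp hm hh hs, mul_comm, ← smul_eq_mul, ← setIntegral_const]
  exact setIntegral_mono_ae_restrict integrable_condExp.integrableOn integrableOn_const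
    (ae_restrict_of_ae hc)

theorem setIntegral_sgd_step_le [IsFiniteMeasure μ] (hm : m ≤ m0) {fstar : ℝ}
    (hgrad : ∀ x, HasGradientAt f (f' x) x) (hLip : LipschitzWith K f') (hlb : ∀ x, fstar ≤ f x)
    (η σ : ℝ) {X ξ : Ω → E} (hXm : StronglyMeasurable[m] X) (hX : MemLp X 2 μ)
    (hξ : MemLp ξ 2 μ) (hce : μ[ξ|m] =ᵐ[μ] 0)
    (hvar : ∀ᵐ ω ∂μ, μ[fun ω => ‖ξ ω‖ ^ 2|m] ω ≤ σ ^ 2) {s : Set Ω} (hs : MeasurableSet[m] s) :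
    ∫ ω in s, f (X ω - η • (f' (X ω) + ξ ω)) ∂μ ≤ ∫ ω in s, f (X ω) ∂μ
      - η * (1 - K * η / 2) * ∫ ω in s, ‖f' (X ω)‖ ^ 2 ∂μ + K * η ^ 2 / 2 * σ ^ 2 * μ.real s := by
  have hG : MemLp (fun ω => f' (X ω)) 2 μ := hLip.comp_memLp_of_isFiniteMeasure hX
  have hfX : Integrable (fun ω => f (X ω)) μ :=
    integrable_comp_of_lipschitzWith_gradient hgrad hLip hlb hX
  have hfX' : Integrable (fun ω => f (X ω - η • (f' (X ω) + ξ ω))) μ :=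
    integrable_comp_of_lipschitzWith_gradient hgrad hLip hlb (memLp_sgd_step hLip hX hξ η)
  have hG2 := hG.integrable_sq_norm
  have hξ2 := hξ.integrable_sq_norm
  have hGξ : Integrable (fun ω => ⟪f' (X ω), ξ ω⟫) μ :=
    (hG.norm.integrable_mul hξ.norm).mono' (hG.1.inner hξ.1)
      (ae_of_all _ fun ω => abs_real_inner_le_norm _ _)
  have hcross : ∫ ω in s, ⟪f' (X ω), ξ ω⟫ ∂μ = 0 :=
    setIntegral_inner_eq_zero_of_condExp_eq_zero hm
      (hLip.continuous.comp_stronglyMeasurable hXm) hGξ (hξ.integrable one_le_two) hce hs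
  have hnoise : ∫ ω in s, ‖ξ ω‖ ^ 2 ∂μ ≤ σ ^ 2 * μ.real s :=
    setIntegral_le_of_condExp_le hm hξ2 hvar hs
  have iA := hfX.integrableOn (s := s)
  have iB := (hG2.const_mul (η * (1 - K * η / 2))).integrableOn (s := s)
  have iC := (hGξ.const_mul (K * η ^ 2 - η)).integrableOn (s := s)
  have iD := (hξ2.const_mul (K * η ^ 2 / 2)).integrableOn (s := s)
  calc ∫ ω in s, f (X ω - η • (f' (X ω) + ξ ω)) ∂μ
      ≤ ∫ ω in s, (f (X ω) - η * (1 - K * η / 2) * ‖f' (X ω)‖ ^ 2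
          + (K * η ^ 2 - η) * ⟪f' (X ω), ξ ω⟫ + K * η ^ 2 / 2 * ‖ξ ω‖ ^ 2) ∂μ :=
        setIntegral_mono hfX'.integrableOn ((iA.fun_sub iB).fun_add iC |>.fun_add iD)
          fun ω => image_sgd_step_le hgrad hLip η (X ω) (ξ ω)
    _ = ∫ ω in s, f (X ω) ∂μ - η * (1 - K * η / 2) * ∫ ω in s, ‖f' (X ω)‖ ^ 2 ∂μ
          + (K * η ^ 2 - η) * ∫ ω in s, ⟪f' (X ω), ξ ω⟫ ∂μ
          + K * η ^ 2 / 2 * ∫ ω in s, ‖ξ ω‖ ^ 2 ∂μ := by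
        rw [integral_add ((iA.fun_sub iB).fun_add iC) iD, integral_add (iA.fun_sub iB) iC,
          integral_sub iA iB, integral_const_mul, integral_const_mul, integral_const_mul]
    _ ≤ _ := by
        rw [hcross]
        nlinarith [mul_le_mul_of_nonneg_left hnoise (by positivity : 0 ≤ (K : ℝ) * η ^ 2 / 2)]

end Expectation

section Blocks

variable {Ω : Type*} {m0 : MeasurableSpace Ω} {μ : Measure Ω}

/-- With `G j = ‖∇f(x_{j+1})‖²` this is the event `τ(ε) > k m + 1`. -/
def aboveThroughBlock (G : ℕ → Ω → ℝ) (ε : ℝ) (m k : ℕ) : Set Ω :=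
  {ω | ∀ j ≤ k, ε < G (j * m) ω}

variable {G : ℕ → Ω → ℝ} {ε : ℝ} {m : ℕ}

theorem aboveThroughBlock_succ_subset (k : ℕ) :
    aboveThroughBlock G ε m (k + 1) ⊆ aboveThroughBlock G ε m k :=
  fun _ hω j hj => hω j (hj.trans k.le_succ)

theorem lt_of_mem_aboveThroughBlock {k : ℕ} {ω : Ω} (hω : ω ∈ aboveThroughBlock G ε m k) :
    ε < G (k * m) ω :=
  hω k le_rfl

theorem measurableSet_aboveThroughBlock {ℱ : Filtration ℕ m0} (hG : StronglyAdapted ℱ G)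
    (k : ℕ) : MeasurableSet[ℱ (k * m)] (aboveThroughBlock G ε m k) := by
  simp only [aboveThroughBlock, Set.ofPred_forall]
  exact MeasurableSet.iInter fun j => MeasurableSet.iInter fun hj =>
    ℱ.mono (Nat.mul_le_mul_right m hj) _ (measurableSet_lt measurable_const (hG (j * m)).measurable)

/-- The integrated form of `𝔼[F (t+1) | ℱ t] ≤ F t - a G t + b`. -/
def SetIntegralDescent (ℱ : Filtration ℕ m0) (μ : Measure Ω) (F G : ℕ → Ω → ℝ) (a b : ℝ) : Prop :=
  ∀ t s, MeasurableSet[ℱ t] s →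
    ∫ ω in s, F (t + 1) ω ∂μ ≤ ∫ ω in s, F t ω ∂μ - a * ∫ ω in s, G t ω ∂μ + b * μ.real s

variable {ℱ : Filtration ℕ m0} {F : ℕ → Ω → ℝ} {a b : ℝ}

theorem SetIntegralDescent.setIntegral_add_le (hstep : SetIntegralDescent ℱ μ F G a b)
    (ha : 0 ≤ a) (hG0 : ∀ t ω, 0 ≤ G t ω) {n : ℕ} {s : Set Ω} (hs : MeasurableSet[ℱ n] s)
    {j : ℕ} (hj : 1 ≤ j) :
    ∫ ω in s, F (n + j) ω ∂μ ≤ ∫ ω in s, F n ω ∂μ - a * ∫ ω in s, G n ω ∂μ + j * b * μ.real s := by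
  induction j, hj using Nat.le_induction with
  | base => simpa using hstep n s hs
  | succ j hj ih =>
    have h := hstep (n + j) s (ℱ.mono (Nat.le_add_right n j) s hs)
    have hGj : 0 ≤ a * ∫ ω in s, G (n + j) ω ∂μ :=
      mul_nonneg ha (integral_nonneg fun ω => hG0 _ ω)
    rw [← add_assoc]
    push_cast
    linarith

theorem SetIntegralDescent.setIntegral_aboveThroughBlock_le [IsFiniteMeasure μ]
    (hstep : SetIntegralDescent ℱ μ F G a b)
    (ha : 0 ≤ a) (hG0 : ∀ t ω, 0 ≤ G t ω) (hGint : ∀ t, Integrable (G t) μ)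
    (hGad : StronglyAdapted ℱ G) (hm : 1 ≤ m) (k : ℕ) :
    ∫ ω in aboveThroughBlock G ε m k, F (k * m + m) ω ∂μ
      ≤ ∫ ω in aboveThroughBlock G ε m k, F (k * m) ω ∂μ
        - (a * ε - m * b) * μ.real (aboveThroughBlock G ε m k) := by
  set A := aboveThroughBlock G ε m k
  have hA : MeasurableSet[ℱ (k * m)] A := measurableSet_aboveThroughBlock hGad k
  have hGA : ε * μ.real A ≤ ∫ ω in A, G (k * m) ω ∂μ :=
    setIntegral_ge_of_const_le_real (ℱ.le _ _ hA) (measure_ne_top μ A)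
      (fun ω hω => (lt_of_mem_aboveThroughBlock hω).le) (hGint _).integrableOn
  have := hstep.setIntegral_add_le ha hG0 hA hm
  nlinarith [mul_le_mul_of_nonneg_left hGA ha]

theorem SetIntegralDescent.setIntegral_add_sum_measureReal_le [IsFiniteMeasure μ]
    (hstep : SetIntegralDescent ℱ μ F G a b)
    (ha : 0 ≤ a) (hF0 : ∀ t ω, 0 ≤ F t ω) (hFint : ∀ t, Integrable (F t) μ)
    (hG0 : ∀ t ω, 0 ≤ G t ω) (hGint : ∀ t, Integrable (G t) μ)
    (hGad : StronglyAdapted ℱ G) (hm : 1 ≤ m) (K : ℕ) :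
    ∫ ω in aboveThroughBlock G ε m K, F (K * m) ω ∂μ
      + (a * ε - m * b) * ∑ k ∈ range K, μ.real (aboveThroughBlock G ε m k) ≤ ∫ ω, F 0 ω ∂μ := by
  induction K with
  | zero => simpa using setIntegral_le_integral (hFint 0) (ae_of_all _ (hF0 0))
  | succ K ih =>
    have hmono : ∫ ω in aboveThroughBlock G ε m (K + 1), F ((K + 1) * m) ω ∂μ
        ≤ ∫ ω in aboveThroughBlock G ε m K, F (K * m + m) ω ∂μ := by
      rw [Nat.succ_mul]
      exact setIntegral_mono_set (hFint _).integrableOn (ae_of_all _ (hF0 _))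
        (ae_of_all _ (aboveThroughBlock_succ_subset K))
    have := hstep.setIntegral_aboveThroughBlock_le ha hG0 hGint hGad hm (ε := ε) K
    rw [sum_range_succ]
    linarith

theorem SetIntegralDescent.tsum_measure_aboveThroughBlock_le [IsFiniteMeasure μ]
    (hstep : SetIntegralDescent ℱ μ F G a b)
    (ha : 0 ≤ a) (hF0 : ∀ t ω, 0 ≤ F t ω) (hFint : ∀ t, Integrable (F t) μ)
    (hG0 : ∀ t ω, 0 ≤ G t ω) (hGint : ∀ t, Integrable (G t) μ)
    (hGad : StronglyAdapted ℱ G) (hm : 1 ≤ m) (he : 0 < a * ε - m * b) :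
    ∑' k, μ (aboveThroughBlock G ε m k) ≤ ENNReal.ofReal ((∫ ω, F 0 ω ∂μ) / (a * ε - m * b)) := by
  refine ENNReal.tsum_le_of_sum_range_le fun K => ?_
  have hsum := hstep.setIntegral_add_sum_measureReal_le (ε := ε) ha hF0 hFint hG0 hGint hGad hm K
  have hK : 0 ≤ ∫ ω in aboveThroughBlock G ε m K, F (K * m) ω ∂μ :=
    integral_nonneg fun ω => hF0 _ ω
  rw [← ENNReal.ofReal_toReal (sum_ne_top.2 fun k _ => measure_ne_top μ _),
    toReal_sum fun k _ => measure_ne_top μ _]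
  refine ENNReal.ofReal_le_ofReal ((le_div_iff₀' he).2 ?_)
  simp only [← measureReal_def]
  linarith

theorem toENNReal_le_one_add_mul_tsum_indicator (hm : 1 ≤ m) {τ : ℕ∞} {ω : Ω}
    (hτ : ∀ j, G (j * m) ω ≤ ε → τ ≤ (j * m + 1 : ℕ)) :
    (τ : ℝ≥0∞) ≤ 1 + m * ∑' k, (aboveThroughBlock G ε m k).indicator (1 : Ω → ℝ≥0∞) ω := by
  classical
  by_cases hall : ∀ k, ω ∈ aboveThroughBlock G ε m k
  · have htop : ∑' k, (aboveThroughBlock G ε m k).indicator (1 : Ω → ℝ≥0∞) ω = ⊤ := by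
      simp [Set.indicator_of_mem (hall _)]
    rw [htop, ENNReal.mul_top (by simp; omega), add_top]
    exact le_top
  simp only [not_forall] at hall
  obtain ⟨j, hjk, hj⟩ : ∃ j ≤ Nat.find hall, G (j * m) ω ≤ ε := by
    simpa [aboveThroughBlock] using Nat.find_spec hall
  have hcount : (Nat.find hall : ℝ≥0∞)
      ≤ ∑' k, (aboveThroughBlock G ε m k).indicator (1 : Ω → ℝ≥0∞) ω := by
    calc (Nat.find hall : ℝ≥0∞)
        = ∑ k ∈ range (Nat.find hall),
            (aboveThroughBlock G ε m k).indicator (1 : Ω → ℝ≥0∞) ω := by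
          rw [sum_congr rfl fun k hk => Set.indicator_of_mem
            (not_not.1 (Nat.find_min hall (mem_range.1 hk))) _]
          simp
      _ ≤ _ := ENNReal.sum_le_tsum _
  calc (τ : ℝ≥0∞) ≤ ((Nat.find hall * m + 1 : ℕ) : ℝ≥0∞) := by
        exact_mod_cast (hτ j hj).trans (by gcongr)
    _ = 1 + m * (Nat.find hall : ℝ≥0∞) := by push_cast; ring
    _ ≤ _ := by gcongr

theorem lintegral_le_one_add_mul_tsum_measure [IsProbabilityMeasure μ]
    (hGad : StronglyAdapted ℱ G) (hm : 1 ≤ m) {τ : Ω → ℕ∞}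
    (hτ : ∀ ω j, G (j * m) ω ≤ ε → τ ω ≤ (j * m + 1 : ℕ)) :
    ∫⁻ ω, (τ ω : ℝ≥0∞) ∂μ ≤ 1 + m * ∑' k, μ (aboveThroughBlock G ε m k) := by
  have hA k : MeasurableSet (aboveThroughBlock G ε m k) :=
    ℱ.le _ _ (measurableSet_aboveThroughBlock hGad k)
  calc ∫⁻ ω, (τ ω : ℝ≥0∞) ∂μ
      ≤ ∫⁻ ω, 1 + m * ∑' k, (aboveThroughBlock G ε m k).indicator (1 : Ω → ℝ≥0∞) ω ∂μ :=
        lintegral_mono fun ω => toENNReal_le_one_add_mul_tsum_indicator hm (hτ ω)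
    _ = 1 + m * ∑' k, μ (aboveThroughBlock G ε m k) := by
        rw [lintegral_add_left measurable_const,
          lintegral_const_mul _ (.tsum fun k => measurable_one.indicator (hA k)),
          lintegral_tsum fun k => (measurable_one.indicator (hA k)).aemeasurable]
        simp [lintegral_indicator_one (hA _)]

end Blocks

section SGD

variable {Ω E : Type*} {m0 : MeasurableSpace Ω} {μ : Measure Ω}
  [NormedAddCommGroup E] [InnerProductSpace ℝ E] [CompleteSpace E]

theorem lintegral_sgd_hittingTime_le [IsProbabilityMeasure μ] {ℱ : Filtration ℕ m0}
    {f : E → ℝ} {f' : E → E} {K : ℝ≥0} (hgrad : ∀ x, HasGradientAt f (f' x) x)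
    (hLip : LipschitzWith K f') (hf0 : ∀ x, 0 ≤ f x) {η σ ε : ℝ} {m : ℕ} (hm : 1 ≤ m)
    (hε : 0 < ε) (he : 0 < η * (1 - K * η / 2) * ε - m * (K * η ^ 2 / 2 * σ ^ 2))
    {X ξ : ℕ → Ω → E} {x₀ : E} (hX0 : X 0 = fun _ => x₀)
    (hrec : ∀ t, X (t + 1) = fun ω => X t ω - η • (f' (X t ω) + ξ t ω))
    (hXad : StronglyAdapted ℱ X) (hξ : ∀ t, MemLp (ξ t) 2 μ) (hce : ∀ t, μ[ξ t|ℱ t] =ᵐ[μ] 0)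
    (hvar : ∀ t, ∀ᵐ ω ∂μ, μ[fun ω => ‖ξ t ω‖ ^ 2|ℱ t] ω ≤ σ ^ 2) {τ : Ω → ℕ∞}
    (hτ : ∀ ω j, ‖f' (X (j * m) ω)‖ ^ 2 ≤ ε → τ ω ≤ (j * m + 1 : ℕ)) :
    ∫⁻ ω, (τ ω : ℝ≥0∞) ∂μ
      ≤ ENNReal.ofReal
          (1 + m * (f x₀ / (η * (1 - K * η / 2) * ε - m * (K * η ^ 2 / 2 * σ ^ 2)))) := by
  set F : ℕ → Ω → ℝ := fun t ω => f (X t ω)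
  set G : ℕ → Ω → ℝ := fun t ω => ‖f' (X t ω)‖ ^ 2
  have hX : ∀ t, MemLp (X t) 2 μ := by
    intro t
    induction t with
    | zero => rw [hX0]; exact memLp_const x₀
    | succ t ih => rw [hrec]; exact memLp_sgd_step hLip ih (hξ t) η
  have hstep : SetIntegralDescent ℱ μ F G (η * (1 - K * η / 2)) (K * η ^ 2 / 2 * σ ^ 2) := by
    intro t s hs
    simp only [F, G, hrec t]
    exact setIntegral_sgd_step_le (ℱ.le t) hgrad hLip hf0 η σ (hXad t) (hX t) (hξ t) (hce t)
      (hvar t) hs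
  have hGad : StronglyAdapted ℱ G := fun t =>
    (hLip.continuous.norm.pow 2).comp_stronglyMeasurable (hXad t)
  have hb : 0 ≤ (m : ℝ) * (K * η ^ 2 / 2 * σ ^ 2) := by positivity
  have ha : 0 ≤ η * (1 - K * η / 2) := by
    by_contra! h
    nlinarith [mul_neg_of_neg_of_pos h hε]
  have hsum := hstep.tsum_measure_aboveThroughBlock_le ha (fun t ω => hf0 _)
    (fun t => integrable_comp_of_lipschitzWith_gradient hgrad hLip hf0 (hX t))
    (fun t ω => sq_nonneg _)
    (fun t => (hLip.comp_memLp_of_isFiniteMeasure (hX t)).integrable_sq_norm) hGad hm he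
  calc ∫⁻ ω, (τ ω : ℝ≥0∞) ∂μ ≤ 1 + m * ∑' k, μ (aboveThroughBlock G ε m k) :=
        lintegral_le_one_add_mul_tsum_measure hGad hm hτ
    _ ≤ 1 + m * ENNReal.ofReal ((∫ ω, F 0 ω ∂μ) /
          (η * (1 - K * η / 2) * ε - m * (K * η ^ 2 / 2 * σ ^ 2))) := by gcongr
    _ = _ := by
        simp only [F, hX0, integral_const, probReal_univ, one_smul]
        rw [ENNReal.ofReal_add zero_le_one (mul_nonneg m.cast_nonneg (div_nonneg (hf0 x₀) he.le)),
          ENNReal.ofReal_mul m.cast_nonneg, ofReal_one, ofReal_natCast]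

end SGD

theorem sgd_early_stopping_expected_time_general
    {Ω : Type*} {m0 : MeasurableSpace Ω} (μ : Measure Ω) [IsProbabilityMeasure μ]
    (ℱ : Filtration ℕ m0)
    {d : ℕ} (f : EuclideanSpace ℝ (Fin d) → ℝ)
    (f' : EuclideanSpace ℝ (Fin d) → EuclideanSpace ℝ (Fin d))
    (hgrad : ∀ x, HasGradientAt f (f' x) x)
    (hLip : ∀ x₁ x₂, ‖f' x₁ - f' x₂‖ ≤ 2 * ‖x₁ - x₂‖)  -- L = 2
    (fstar : ℝ) (hlb : ∀ x, fstar ≤ f x)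
    (σ : ℝ) (m : ℕ) (hm : 1 ≤ m) (ε : ℝ) (hε : 0 < ε)
    (c : ℝ) (hc0 : 0 < c) (hc1 : c < 1)
    (η : ℝ) (hη : η = c * ε / (m * σ ^ 2 + ε))
    (x δ : ℕ → Ω → EuclideanSpace ℝ (Fin d))
    (x₁ : EuclideanSpace ℝ (Fin d)) (hinit : x 1 = fun _ => x₁)
    (hrec : ∀ t, 1 ≤ t → x (t + 1) = fun ω => x t ω - η • (f' (x t ω) + δ t ω))
    (hxmeas : ∀ t, 1 ≤ t → StronglyMeasurable[ℱ (t - 1)] (x t))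
    (hδint : ∀ t, Integrable (δ t) μ)
    (hδint2 : ∀ t, Integrable (fun ω => ‖δ t ω‖ ^ 2) μ)
    (hmart : ∀ t, 1 ≤ t → μ[δ t|ℱ (t - 1)] =ᵐ[μ] 0)
    (hvar : ∀ t, 1 ≤ t → ∀ᵐ ω ∂μ, (μ[fun ω' => ‖δ t ω'‖ ^ 2|ℱ (t - 1)]) ω ≤ σ ^ 2)
    (τ : Ω → ℕ∞)
    (hτ : ∀ ω, τ ω = sInf {n : ℕ∞ | ∃ k : ℕ, n = k ∧ 1 ≤ k ∧ k % m = 1 % m ∧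
        ‖f' (x k ω)‖ ^ 2 ≤ ε}) :
    ∫⁻ ω, (τ ω : ℝ≥0∞) ∂μ
      ≤ ENNReal.ofReal ((f x₁ - fstar) * m ^ 2 * σ ^ 2 / (ε ^ 2 * c * (1 - c))
          + (f x₁ - fstar) * m / (c * (1 - c) * ε) + 1 / (1 - c)) := by
  have hLip' : LipschitzWith 2 f' :=
    .of_dist_le_mul fun a b => by simpa only [dist_eq_norm, NNReal.coe_ofNat] using hLip a b
  have hη0 : 0 < η := by rw [hη]; positivity
  have h1c : 0 < 1 - c := sub_pos.2 hc1
  have he : η * (1 - 2 * η / 2) * ε - m * (2 * η ^ 2 / 2 * σ ^ 2) = η * ε * (1 - c) := by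
    have hkey : η * (m * σ ^ 2 + ε) = c * ε := by rw [hη]; field_simp
    linear_combination (-η) * hkey
  have hbound := lintegral_sgd_hittingTime_le (ℱ := ℱ) (f := fun y => f y - fstar)
    (X := fun t => x (t + 1)) (ξ := fun t => δ (t + 1)) (τ := τ)
    (fun y => (hgrad y).sub_const fstar) hLip' (fun y => sub_nonneg.2 (hlb y)) hm hε
    (by push_cast; rw [he]; positivity) hinit (fun t => hrec (t + 1) le_add_self)
    (fun t => by simpa using hxmeas (t + 1) le_add_self)
    (fun t => (memLp_two_iff_integrable_sq_norm (hδint _).1).2 (hδint2 _))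
    (fun t => by simpa using hmart (t + 1) le_add_self)
    (fun t => by simpa using hvar (t + 1) le_add_self)
    (fun ω j hj => by rw [hτ ω]; exact sInf_le ⟨j * m + 1, rfl, le_add_self, by simp, hj⟩)
  simp only [NNReal.coe_ofNat, he] at hbound
  refine hbound.trans (ENNReal.ofReal_le_ofReal ?_)
  have hsplit : m * ((f x₁ - fstar) / (η * ε * (1 - c)))
      = (f x₁ - fstar) * m ^ 2 * σ ^ 2 / (ε ^ 2 * c * (1 - c))
        + (f x₁ - fstar) * m / (c * (1 - c) * ε) := by
    rw [hη]; field_simp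
  have hone : 1 ≤ 1 / (1 - c) := by rw [le_div_iff₀ h1c]; linarith
  linarith

theorem sgd_early_stopping_expected_time
    {Ω : Type*} {m0 : MeasurableSpace Ω} (μ : Measure Ω) [IsProbabilityMeasure μ]
    (ℱ : Filtration ℕ m0)
    {d : ℕ} (f : EuclideanSpace ℝ (Fin d) → ℝ)
    (f' : EuclideanSpace ℝ (Fin d) → EuclideanSpace ℝ (Fin d))
    (hgrad : ∀ x, HasGradientAt f (f' x) x)
    (hLip : ∀ x₁ x₂, ‖f' x₁ - f' x₂‖ ≤ 2 * ‖x₁ - x₂‖)  -- L = 2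
    (fstar : ℝ) (hlb : ∀ x, fstar ≤ f x)
    (σ : ℝ) (hσ : 0 < σ) (m : ℕ) (hm : 1 ≤ m) (ε : ℝ) (hε : 0 < ε)
    (c : ℝ) (hc0 : 0 < c) (hc1 : c < 1)
    (η : ℝ) (hη : η = c * ε / (m * σ ^ 2 + ε))
    (x δ : ℕ → Ω → EuclideanSpace ℝ (Fin d))
    (x₁ : EuclideanSpace ℝ (Fin d)) (hinit : x 1 = fun _ => x₁)
    (hrec : ∀ t, 1 ≤ t → x (t + 1) = fun ω => x t ω - η • (f' (x t ω) + δ t ω))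
    (hxmeas : ∀ t, 1 ≤ t → StronglyMeasurable[ℱ (t - 1)] (x t))
    (hδmeas : ∀ t, StronglyMeasurable[ℱ t] (δ t))
    (hδint : ∀ t, Integrable (δ t) μ)
    (hδint2 : ∀ t, Integrable (fun ω => ‖δ t ω‖ ^ 2) μ)
    (hmart : ∀ t, 1 ≤ t → μ[δ t|ℱ (t - 1)] =ᵐ[μ] 0)
    (hvar : ∀ t, 1 ≤ t → ∀ᵐ ω ∂μ, (μ[fun ω' => ‖δ t ω'‖ ^ 2|ℱ (t - 1)]) ω ≤ σ ^ 2)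
    (τ : Ω → ℕ∞)
    (hτ : ∀ ω, τ ω = sInf {n : ℕ∞ | ∃ k : ℕ, n = k ∧ 1 ≤ k ∧ k % m = 1 % m ∧
        ‖f' (x k ω)‖ ^ 2 ≤ ε}) :
    ∫⁻ ω, (τ ω : ℝ≥0∞) ∂μ
      ≤ ENNReal.ofReal ((f x₁ - fstar) * m ^ 2 * σ ^ 2 / (ε ^ 2 * c * (1 - c))
          + (f x₁ - fstar) * m / (c * (1 - c) * ε) + 1 / (1 - c)) :=
  sgd_early_stopping_expected_time_general μ ℱ f f' hgrad hLip fstar hlb σ m hm ε hε c hc0 hc1 η hη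
    x δ x₁ hinit hrec hxmeas hδint hδint2 hmart hvar τ hτ
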